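/- arXiv:2407.03547 — 3 statements merged into one kernel-verified Lean document; each statement's English description precedes it below -/
import Mathlib

section
/- For every real number ξ with ν̄²ξ² ≤ 4c̄², the eigenvalues λ₁(ξ) = −(ν̄/2)ξ² − iξ√(c̄² − ν̄²ξ²/4) and λ₂(ξ) = −(ν̄/2)ξ² + iξ√(c̄² − ν̄²ξ²/4) satisfy the quantitative third-order expansions |λ₁(ξ) − (−i c̄ ξ − (ν̄/2)ξ²)| ≤ (ν̄²/(4c̄))·|ξ|³ and |λ₂(ξ) − (i c̄ ξ − (ν̄/2)ξ²)| ≤ (ν̄²/(4c̄))·|ξ|³. -/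
/-- Quantitative third-order low-frequency expansion of the eigenvalues:
for `ν̄²ξ² ≤ 4c̄²`,
`|λ₁(ξ) − (−i c̄ ξ − (ν̄/2)ξ²)| ≤ (ν̄²/(4c̄))·|ξ|³` and
`|λ₂(ξ) − (i c̄ ξ − (ν̄/2)ξ²)| ≤ (ν̄²/(4c̄))·|ξ|³`, where
`λ₁(ξ) = −(ν̄/2)ξ² − iξ√(c̄² − ν̄²ξ²/4)` and `λ₂(ξ) = −(ν̄/2)ξ² + iξ√(c̄² − ν̄²ξ²/4)`. -/
theorem eigenvalue_expansion_low (c ν : ℝ) (hc : 0 < c) (hν : 0 < ν) (ξ : ℝ)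
    (h : ν ^ 2 * ξ ^ 2 ≤ 4 * c ^ 2) :
    ‖
        (((-(ν / 2) * ξ ^ 2 : ℝ) -
            Complex.I * (ξ : ℂ) * (Real.sqrt (c ^ 2 - ν ^ 2 * ξ ^ 2 / 4) : ℝ)) -
          (-Complex.I * (c : ℂ) * (ξ : ℂ) - ((ν / 2 : ℝ) : ℂ) * (ξ : ℂ) ^ 2))‖ ≤
      ν ^ 2 / (4 * c) * |ξ| ^ 3 ∧
    ‖
        (((-(ν / 2) * ξ ^ 2 : ℝ) +
            Complex.I * (ξ : ℂ) * (Real.sqrt (c ^ 2 - ν ^ 2 * ξ ^ 2 / 4) : ℝ)) -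
          (Complex.I * (c : ℂ) * (ξ : ℂ) - ((ν / 2 : ℝ) : ℂ) * (ξ : ℂ) ^ 2))‖ ≤
      ν ^ 2 / (4 * c) * |ξ| ^ 3 := by
  set s := Real.sqrt (c ^ 2 - ν ^ 2 * ξ ^ 2 / 4) with hs
  have hxc : 0 ≤ c ^ 2 - ν ^ 2 * ξ ^ 2 / 4 := by nlinarith
  have hs0 : 0 ≤ s := Real.sqrt_nonneg _
  have hs2 : s ^ 2 = c ^ 2 - ν ^ 2 * ξ ^ 2 / 4 := Real.sq_sqrt hxc
  have hsc : s ≤ c := by nlinarith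
  have key : c - s ≤ ν ^ 2 * ξ ^ 2 / 4 / c := by
    rw [le_div_iff₀ hc]
    nlinarith
  have hbound : |ξ| * (c - s) ≤ ν ^ 2 / (4 * c) * |ξ| ^ 3 := by
    have h1 : |ξ| * (c - s) ≤ |ξ| * (ν ^ 2 * ξ ^ 2 / 4 / c) :=
      mul_le_mul_of_nonneg_left key (abs_nonneg ξ)
    have h2 : ξ ^ 2 = |ξ| ^ 2 := (sq_abs ξ).symm
    calc |ξ| * (c - s) ≤ |ξ| * (ν ^ 2 * ξ ^ 2 / 4 / c) := h1
      _ = ν ^ 2 / (4 * c) * |ξ| ^ 3 := by field_simp; rw [← sq_abs ξ]; ring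
  constructor
  · have e1 : (((-(ν / 2) * ξ ^ 2 : ℝ) -
            Complex.I * (ξ : ℂ) * (s : ℝ)) -
          (-Complex.I * (c : ℂ) * (ξ : ℂ) - ((ν / 2 : ℝ) : ℂ) * (ξ : ℂ) ^ 2))
        = ((ξ * (c - s) : ℝ) : ℂ) * Complex.I := by push_cast; ring
    rw [e1, norm_mul, Complex.norm_I, mul_one, Complex.norm_real, Real.norm_eq_abs, abs_mul,
      abs_of_nonneg (by linarith : (0:ℝ) ≤ c - s)]
    exact hbound
  · have e2 : (((-(ν / 2) * ξ ^ 2 : ℝ) +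
            Complex.I * (ξ : ℂ) * (s : ℝ)) -
          (Complex.I * (c : ℂ) * (ξ : ℂ) - ((ν / 2 : ℝ) : ℂ) * (ξ : ℂ) ^ 2))
        = ((ξ * (s - c) : ℝ) : ℂ) * Complex.I := by push_cast; ring
    rw [e2, norm_mul, Complex.norm_I, mul_one, Complex.norm_real, Real.norm_eq_abs, abs_mul,
      abs_sub_comm, abs_of_nonneg (by linarith : (0:ℝ) ≤ c - s)]
    exact hbound
end

section
/- For every real number ξ and every complex root λ of the quadratic λ² + ν̄ξ²λ + c̄²ξ² = 0, one has Re λ ≤ −min( (ν̄/2)ξ² , c̄²/ν̄ ). -/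
/-!
Writing `λ = x + iy`, the imaginary part of the equation is `y (2x + ν̄ξ²) = 0`. A non-real root
therefore has `x = -ν̄ξ²/2`. A real root satisfies `ν̄ξ² x = -c̄²ξ² - x² ≤ -c̄²ξ²`, so `x ≤ -c̄²/ν̄`
when `ξ ≠ 0`, while for `ξ = 0` the only root is `0`.
-/

namespace Complex

theorem re_eq_neg_half_or_quadratic_re_eq_zero (b q : ℝ) {z : ℂ}
    (hz : z ^ 2 + b * z + q = 0) : z.re = -b / 2 ∨ z.re ^ 2 + b * z.re + q = 0 := by
  have hre : z.re ^ 2 - z.im ^ 2 + b * z.re + q = 0 := by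
    simpa [pow_two] using congrArg re hz
  have him : z.im * (2 * z.re + b) = 0 := by
    have h := congrArg im hz
    simp only [pow_two, add_im, mul_im, ofReal_re, ofReal_im, zero_im] at h
    linarith
  rcases mul_eq_zero.mp him with him0 | hsum
  · right
    simpa [him0] using hre
  · left
    linarith

end Complex

theorem le_neg_div_of_sq_add_mul_add_eq_zero {p r x : ℝ} (hp : 0 < p)
    (hx : x ^ 2 + p * x + r = 0) : x ≤ -(r / p) := by
  rw [le_neg, div_le_iff₀ hp]
  nlinarith [sq_nonneg x]

theorem root_re_bound_general (c ν : ℝ) (hν : 0 < ν) (ξ : ℝ) (lam : ℂ)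
    (hroot : lam ^ 2 + (ν : ℂ) * (ξ : ℂ) ^ 2 * lam + (c : ℂ) ^ 2 * (ξ : ℂ) ^ 2 = 0) :
    lam.re ≤ -min ((ν / 2) * ξ ^ 2) (c ^ 2 / ν) := by
  have hroot' : lam ^ 2 + ((ν * ξ ^ 2 : ℝ) : ℂ) * lam + ((c ^ 2 * ξ ^ 2 : ℝ) : ℂ) = 0 := by
    push_cast
    exact hroot
  rcases Complex.re_eq_neg_half_or_quadratic_re_eq_zero _ _ hroot' with
    hcomplex | hreal
  · have := min_le_left ((ν / 2) * ξ ^ 2) (c ^ 2 / ν)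
    linarith
  rcases eq_or_ne ξ 0 with rfl | hξ
  · have hre : lam.re = 0 := by simpa using hreal
    rw [hre, neg_nonneg]
    exact (min_le_left _ _).trans (by simp)
  · have hbound := le_neg_div_of_sq_add_mul_add_eq_zero (by positivity) hreal
    rw [mul_div_mul_right _ _ (pow_ne_zero 2 hξ)] at hbound
    have := min_le_right ((ν / 2) * ξ ^ 2) (c ^ 2 / ν)
    linarith

/-- Unified spectral bound: for every real `ξ`, every complex root of
`λ² + ν̄ξ²λ + c̄²ξ² = 0` satisfies `Re λ ≤ −min((ν̄/2)ξ², c̄²/ν̄)`. -/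
theorem root_re_bound (c ν : ℝ) (hc : 0 < c) (hν : 0 < ν) (ξ : ℝ) (lam : ℂ)
    (hroot : lam ^ 2 + (ν : ℂ) * (ξ : ℂ) ^ 2 * lam + (c : ℂ) ^ 2 * (ξ : ℂ) ^ 2 = 0) :
    lam.re ≤ -min ((ν / 2) * ξ ^ 2) (c ^ 2 / ν) :=
  root_re_bound_general c ν hν ξ lam hroot
end

section
/- For every fixed t > 0, the matrix exp(t·Â(ξ)) converges, as ξ → +∞, to e^{−(c̄²/ν̄)t}·A, where A is the 2×2 matrix with rows (1, 0) and (0, 0). -/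
open NormedSpace Filter
open Matrix

/-- The Fourier symbol of the linearized 1-D compressible Navier–Stokes system. -/
noncomputable def symbolA (c ν ξ : ℝ) : Matrix (Fin 2) (Fin 2) ℂ :=
  !![0, Complex.I * (ξ : ℂ);
     Complex.I * (c : ℂ) ^ 2 * (ξ : ℂ), -(ν : ℂ) * (ξ : ℂ) ^ 2]

lemma diag2 (a b : ℂ) : Matrix.diagonal ![a, b] = !![a, 0; 0, b] := by
  ext i j
  fin_cases i <;> fin_cases j <;> simp [Matrix.diagonal]

lemma exp_smul_symbolA (c ν t ξ : ℝ) (hξ : 0 < ξ) (l1 l2 : ℝ)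
    (hsum : l1 + l2 = -ν * ξ^2) (hprod : l1 * l2 = c^2 * ξ^2) (hne : l1 ≠ l2) :
    exp ((t : ℂ) • symbolA c ν ξ) =
      (Complex.I * ξ * ((l2 : ℂ) - l1))⁻¹ •
        (!![Complex.I * ξ, Complex.I * ξ; (l1:ℂ), (l2:ℂ)] *
          Matrix.diagonal ![Complex.exp (t*l1), Complex.exp (t*l2)] *
          !![(l2:ℂ), -(Complex.I*ξ); -(l1:ℂ), Complex.I*ξ]) := by
  have hξC : (ξ:ℂ) ≠ 0 := by exact_mod_cast hξ.ne'
  have hneC : (l2:ℂ) - l1 ≠ 0 := sub_ne_zero.mpr (by exact_mod_cast hne.symm)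
  have hsumC : (l1:ℂ) + l2 = -(ν:ℂ) * ξ^2 := by exact_mod_cast hsum
  have hprodC : (l1:ℂ) * l2 = (c:ℂ)^2 * ξ^2 := by exact_mod_cast hprod
  set s : ℂ := Complex.I * ξ * ((l2 : ℂ) - l1) with hs
  have hsne : s ≠ 0 := by
    simp [hs, Complex.I_ne_zero, hξC, hneC]
  set P : Matrix (Fin 2) (Fin 2) ℂ := !![Complex.I * ξ, Complex.I * ξ; (l1:ℂ), (l2:ℂ)] with hP
  set R : Matrix (Fin 2) (Fin 2) ℂ := !![(l2:ℂ), -(Complex.I*ξ); -(l1:ℂ), Complex.I*ξ] with hR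
  have hPR : P * R = s • 1 := by
    ext i j
    fin_cases i <;> fin_cases j <;>
      simp [hP, hR, hs, Matrix.mul_apply, Fin.sum_univ_two] <;> ring
  have hRP : R * P = s • 1 := by
    ext i j
    fin_cases i <;> fin_cases j <;>
      simp [hP, hR, hs, Matrix.mul_apply, Fin.sum_univ_two] <;> ring
  have hPQ : P * (s⁻¹ • R) = 1 := by
    rw [Matrix.mul_smul, hPR, smul_smul, inv_mul_cancel₀ hsne, one_smul]
  have hQP : (s⁻¹ • R) * P = 1 := by
    rw [Matrix.smul_mul, hRP, smul_smul, inv_mul_cancel₀ hsne, one_smul]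
  let U : (Matrix (Fin 2) (Fin 2) ℂ)ˣ := ⟨P, s⁻¹ • R, hPQ, hQP⟩
  have hUinv : (↑U⁻¹ : Matrix (Fin 2) (Fin 2) ℂ) = s⁻¹ • R := rfl
  have hdecomp : (t : ℂ) • symbolA c ν ξ =
      (U : Matrix (Fin 2) (Fin 2) ℂ) * Matrix.diagonal ![(t:ℂ)*l1, (t:ℂ)*l2] *
        ((U⁻¹ : (Matrix (Fin 2) (Fin 2) ℂ)ˣ) : Matrix (Fin 2) (Fin 2) ℂ) := by
    rw [hUinv]
    show (t : ℂ) • symbolA c ν ξ = P * Matrix.diagonal ![(t:ℂ)*l1, (t:ℂ)*l2] * (s⁻¹ • R)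
    rw [diag2]
    ext i j
    fin_cases i <;> fin_cases j <;>
      simp [hP, hR, hs, symbolA, Matrix.mul_apply, Fin.sum_univ_two]
    all_goals field_simp
    all_goals ring_nf
    · linear_combination ((t:ℂ)*((l2:ℂ)-l1)) * Complex.I_sq
    · linear_combination (-(t:ℂ)*((l2:ℂ)-l1)) * hprodC
    · linear_combination ((t:ℂ)*((l2:ℂ)^2-(l1:ℂ)^2)) * Complex.I_sq +
        ((t:ℂ)*((l1:ℂ)-l2)) * hsumC
  rw [hdecomp, Matrix.exp_units_conj U, Matrix.exp_diagonal, Pi.exp_def, hUinv,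
    Matrix.mul_smul]
  congr 1
  congr 2
  ext i j
  fin_cases i <;> fin_cases j <;> simp [← Complex.exp_eq_exp_ℂ, Matrix.diagonal]

lemma matrix_product_entries (c ξ l1 l2 E1 E2 μ : ℝ) (hξ : 0 < ξ) (hμ : 0 < μ)
    (hdiff : l1 - l2 = ξ * μ) (hprod : l1 * l2 = c^2 * ξ^2) :
    (Complex.I * ξ * ((l2:ℂ) - l1))⁻¹ •
      (!![Complex.I * ξ, Complex.I * ξ; (l1:ℂ), (l2:ℂ)] *
        Matrix.diagonal ![(E1:ℂ), (E2:ℂ)] *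
        !![(l2:ℂ), -(Complex.I*ξ); -(l1:ℂ), Complex.I*ξ]) =
    !![ ((((-l2)*E1 + l1*E2)/(ξ*μ) : ℝ) : ℂ), Complex.I * (((E1-E2)/μ : ℝ):ℂ);
        Complex.I * ((c^2*(E1-E2)/μ : ℝ):ℂ), (((l1*E1 - l2*E2)/(ξ*μ) : ℝ):ℂ) ] := by
  have hξC : (ξ:ℂ) ≠ 0 := by exact_mod_cast hξ.ne'
  have hμC : (μ:ℂ) ≠ 0 := by exact_mod_cast hμ.ne'
  have hdiffC : (l1:ℂ) - l2 = (ξ:ℂ) * μ := by exact_mod_cast hdiff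
  have hprodC : (l1:ℂ) * l2 = (c:ℂ)^2 * (ξ:ℂ)^2 := by exact_mod_cast hprod
  have hneC : (l2:ℂ) - l1 ≠ 0 := by
    rw [show (l2:ℂ) - l1 = -((ξ:ℂ)*μ) by linear_combination -hdiffC]
    simp [hξC, hμC]
  rw [diag2]
  ext i j
  fin_cases i <;> fin_cases j <;>
    simp [Matrix.mul_apply, Fin.sum_univ_two]
  all_goals rw [show (l2:ℂ) - l1 = -((ξ:ℂ)*μ) by linear_combination -hdiffC]
  all_goals field_simp
  all_goals ring_nf
  · linear_combination (((E1:ℂ)*l2 - (E2:ℂ)*l1)) * Complex.I_sq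
  · linear_combination (-((E1:ℂ)-E2)) * Complex.I_sq
  · linear_combination (((E1:ℂ)-E2)) * hprodC
  · linear_combination (-((l1:ℂ)*E1-(l2:ℂ)*E2)) * Complex.I_sq

lemma tendsto_mat2 {α : Type*} {l : Filter α}
    {f : α → Matrix (Fin 2) (Fin 2) ℂ} {L : Matrix (Fin 2) (Fin 2) ℂ}
    (h : ∀ i j, Tendsto (fun x => f x i j) l (nhds (L i j))) :
    Tendsto f l (nhds L) := by
  refine tendsto_pi_nhds.mpr ?_
  intro i
  refine tendsto_pi_nhds.mpr ?_
  exact h i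

set_option maxHeartbeats 1000000 in
/-- For fixed `t > 0`, `exp(t·Â(ξ)) → e^{−(c̄²/ν̄)t}·A` as `ξ → +∞`, where
`A = !![1, 0; 0, 0]`. -/
theorem exp_symbolA_tendsto_atTop (c ν : ℝ) (hc : 0 < c) (hν : 0 < ν) (t : ℝ) (ht : 0 < t) :
    Tendsto (fun ξ : ℝ => exp ((t : ℂ) • symbolA c ν ξ)) atTop
      (nhds ((Real.exp (-(c ^ 2 / ν) * t) : ℂ) • !![(1 : ℂ), 0; 0, 0])) := by
  have hν' : ν ≠ 0 := hν.ne'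
  set μf : ℝ → ℝ := fun ξ => Real.sqrt (ν^2*ξ^2 - 4*c^2) with hμf
  set l1f : ℝ → ℝ := fun ξ => (-ν*ξ^2 + ξ * μf ξ)/2 with hl1f
  set l2f : ℝ → ℝ := fun ξ => (-ν*ξ^2 - ξ * μf ξ)/2 with hl2f
  set E1f : ℝ → ℝ := fun ξ => Real.exp (t * l1f ξ) with hE1f
  set E2f : ℝ → ℝ := fun ξ => Real.exp (t * l2f ξ) with hE2f
  set ξ₀ : ℝ := 2*c/ν + 1 with hξ₀
  have hS : ∀ᶠ ξ in atTop, ξ₀ ≤ ξ := eventually_ge_atTop _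
  have hpos : ∀ ξ, ξ₀ ≤ ξ → 0 < ξ := fun ξ hξ => lt_of_lt_of_le (by positivity) hξ
  have hdisc : ∀ ξ, ξ₀ ≤ ξ → 0 < ν^2*ξ^2 - 4*c^2 := by
    intro ξ hξ
    have key : 2*c + ν ≤ ν*ξ := by
      have h1 := mul_le_mul_of_nonneg_left hξ hν.le
      calc 2*c + ν = ν * ξ₀ := by rw [hξ₀]; field_simp
        _ ≤ ν * ξ := h1
    nlinarith [hc.le, hν.le]
  have hμpos : ∀ ξ, ξ₀ ≤ ξ → 0 < μf ξ := fun ξ hξ => Real.sqrt_pos.mpr (hdisc ξ hξ)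
  have hμsq : ∀ ξ, ξ₀ ≤ ξ → μf ξ^2 = ν^2*ξ^2 - 4*c^2 :=
    fun ξ hξ => Real.sq_sqrt (hdisc ξ hξ).le
  -- (1) μf ξ / ξ → ν
  have hratio : Tendsto (fun ξ => μf ξ / ξ) atTop (nhds ν) := by
    have h2 : Tendsto (fun ξ:ℝ => 4*c^2/ξ^2) atTop (nhds 0) := by
      have h3 := (tendsto_pow_atTop (n := 2) (two_ne_zero) (α := ℝ)).inv_tendsto_atTop
      have h4 := h3.const_mul (4*c^2)
      simpa [div_eq_mul_inv, Pi.inv_def] using h4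
    have hinner : Tendsto (fun ξ:ℝ => ν^2 - 4*c^2/ξ^2) atTop (nhds (ν^2)) := by
      simpa using tendsto_const_nhds.sub h2
    have hsq : Tendsto (fun ξ:ℝ => Real.sqrt (ν^2 - 4*c^2/ξ^2)) atTop (nhds ν) := by
      have h5 := (Real.continuous_sqrt.tendsto (ν^2)).comp hinner
      simpa [Real.sqrt_sq hν.le, Function.comp_def] using h5
    refine hsq.congr' ?_
    filter_upwards [hS] with ξ hξ
    have hξp := hpos ξ hξ
    rw [show ν^2 - 4*c^2/ξ^2 = (ν^2*ξ^2 - 4*c^2)/ξ^2 by field_simp,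
      Real.sqrt_div' _ (sq_nonneg ξ), Real.sqrt_sq hξp.le]
  -- (2) l1f → -(c²/ν)
  have hl1 : Tendsto l1f atTop (nhds (-(c^2/ν))) := by
    have hden : Tendsto (fun ξ => ν + μf ξ/ξ) atTop (nhds (ν+ν)) :=
      tendsto_const_nhds.add hratio
    have hmain : Tendsto (fun ξ => -(2*c^2) / (ν + μf ξ/ξ)) atTop
        (nhds (-(2*c^2)/(ν+ν))) := tendsto_const_nhds.div hden (by positivity)
    have hval : -(2*c^2)/(ν+ν) = -(c^2/ν) := by field_simp; ring
    rw [hval] at hmain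
    refine hmain.congr' ?_
    filter_upwards [hS] with ξ hξ
    have hξp := hpos ξ hξ
    have hμp := hμpos ξ hξ
    have hsq := hμsq ξ hξ
    have hdp : 0 < ν + μf ξ/ξ := by positivity
    rw [hl1f]
    field_simp
    ring_nf
    nlinarith [hsq]
  -- (3) E1f → exp(-(c²/ν)t)
  have hE1 : Tendsto E1f atTop (nhds (Real.exp (-(c^2/ν)*t))) := by
    have h6 : Tendsto (fun ξ => t * l1f ξ) atTop (nhds (t * -(c^2/ν))) :=
      tendsto_const_nhds.mul hl1
    have h7 := (Real.continuous_exp.tendsto _).comp h6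
    simpa [mul_comm, Function.comp_def] using h7
  -- (4) μf → ∞, inverses
  have hμtop : Tendsto μf atTop atTop := by
    refine Tendsto.congr' ?_ (hratio.pos_mul_atTop hν tendsto_id)
    filter_upwards [hS] with ξ hξ
    field_simp [(hpos ξ hξ).ne']
    rfl
  have hinvμ : Tendsto (fun ξ => (μf ξ)⁻¹) atTop (nhds 0) := hμtop.inv_tendsto_atTop
  have hξμtop : Tendsto (fun ξ => ξ * μf ξ) atTop atTop :=
    tendsto_id.atTop_mul_atTop₀ hμtop
  have hinvξμ : Tendsto (fun ξ => (ξ * μf ξ)⁻¹) atTop (nhds 0) := hξμtop.inv_tendsto_atTop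
  -- (5) l2f → -∞, E2f → 0
  have hl2 : Tendsto l2f atTop atBot := by
    have hg : Tendsto (fun ξ:ℝ => -((ν/2)*ξ^2)) atTop atBot :=
      tendsto_neg_atTop_atBot.comp ((tendsto_pow_atTop two_ne_zero).const_mul_atTop
        (half_pos hν))
    refine tendsto_atBot_mono' atTop ?_ hg
    filter_upwards [hS] with ξ hξ
    have hξp := hpos ξ hξ
    have hμp := hμpos ξ hξ
    rw [hl2f]
    nlinarith [mul_pos hξp hμp]
  have hE2 : Tendsto E2f atTop (nhds 0) := by
    have h8 : Tendsto (fun ξ => t * l2f ξ) atTop atBot := hl2.const_mul_atBot ht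
    exact Real.tendsto_exp_atBot.comp h8
  -- (6) ratios
  have hξdivμ : Tendsto (fun ξ => ξ / μf ξ) atTop (nhds ν⁻¹) := by
    refine (hratio.inv₀ hν').congr' ?_
    filter_upwards [hS] with ξ hξ
    show (μf ξ / ξ)⁻¹ = ξ / μf ξ
    rw [inv_div]
  have hr2 : Tendsto (fun ξ => l2f ξ/(ξ*μf ξ)) atTop (nhds (-1)) := by
    have h9 : Tendsto (fun ξ => -((ν*(ξ/μf ξ)+1)/2)) atTop
        (nhds (-((ν*ν⁻¹+1)/2))) :=
      (((tendsto_const_nhds.mul hξdivμ).add tendsto_const_nhds).div_const 2).neg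
    have hval : -((ν*ν⁻¹+1)/2) = -1 := by rw [mul_inv_cancel₀ hν']; norm_num
    rw [hval] at h9
    refine h9.congr' ?_
    filter_upwards [hS] with ξ hξ
    have hξp := hpos ξ hξ
    have hμp := hμpos ξ hξ
    rw [hl2f]
    field_simp
    ring
  have hr1 : Tendsto (fun ξ => l1f ξ/(ξ*μf ξ)) atTop (nhds 0) := by
    have := hl1.mul hinvξμ
    simpa [div_eq_mul_inv] using this
  -- entry limits
  have h00 : Tendsto (fun ξ => ((-(l2f ξ))*E1f ξ + l1f ξ*E2f ξ)/(ξ*μf ξ)) atTop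
      (nhds (Real.exp (-(c^2/ν)*t))) := by
    have h10 := (hr2.neg.mul hE1).add (hr1.mul hE2)
    rw [show -(-1) * Real.exp (-(c^2/ν)*t) + 0*0 = Real.exp (-(c^2/ν)*t) by ring] at h10
    refine h10.congr' ?_
    filter_upwards [hS] with ξ hξ
    have hξp := hpos ξ hξ
    have hμp := hμpos ξ hξ
    field_simp
  have h11 : Tendsto (fun ξ => (l1f ξ*E1f ξ - l2f ξ*E2f ξ)/(ξ*μf ξ)) atTop (nhds 0) := by
    have h12 := (hr1.mul hE1).sub (hr2.mul hE2)
    rw [show 0 * Real.exp (-(c^2/ν)*t) - (-1)*0 = (0:ℝ) by ring] at h12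
    refine h12.congr' ?_
    filter_upwards [hS] with ξ hξ
    have hξp := hpos ξ hξ
    have hμp := hμpos ξ hξ
    field_simp
  have h0 : Tendsto (fun ξ => (E1f ξ - E2f ξ)/μf ξ) atTop (nhds 0) := by
    have h13 := (hE1.sub hE2).mul hinvμ
    simpa [div_eq_mul_inv] using h13
  have h0c : Tendsto (fun ξ => c^2*(E1f ξ - E2f ξ)/μf ξ) atTop (nhds 0) := by
    have h14 := (tendsto_const_nhds (x := (c^2:ℝ))).mul h0
    rw [show c^2 * (0:ℝ) = 0 by ring] at h14
    refine h14.congr' (Eventually.of_forall fun ξ => by ring)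
  -- assemble
  have key : ∀ᶠ ξ in atTop, exp ((t : ℂ) • symbolA c ν ξ) =
      !![ ((((-(l2f ξ))*E1f ξ + l1f ξ*E2f ξ)/(ξ*μf ξ) : ℝ) : ℂ),
          Complex.I * (((E1f ξ-E2f ξ)/μf ξ : ℝ):ℂ);
          Complex.I * ((c^2*(E1f ξ-E2f ξ)/μf ξ : ℝ):ℂ),
          (((l1f ξ*E1f ξ - l2f ξ*E2f ξ)/(ξ*μf ξ) : ℝ):ℂ) ] := by
    filter_upwards [hS] with ξ hξ
    have hξp := hpos ξ hξ
    have hμp := hμpos ξ hξ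
    have hsq := hμsq ξ hξ
    have hsum : l1f ξ + l2f ξ = -ν * ξ^2 := by rw [hl1f, hl2f]; ring
    have hprod : l1f ξ * l2f ξ = c^2 * ξ^2 := by
      rw [hl1f, hl2f]; nlinarith [hsq]
    have hdiff : l1f ξ - l2f ξ = ξ * μf ξ := by rw [hl1f, hl2f]; ring
    have hne : l1f ξ ≠ l2f ξ := by
      intro h
      rw [h] at hdiff
      nlinarith [mul_pos hξp hμp]
    rw [exp_smul_symbolA c ν t ξ hξp (l1f ξ) (l2f ξ) hsum hprod hne]
    have eE1 : Complex.exp ((t:ℂ)*(l1f ξ:ℂ)) = ((E1f ξ : ℝ):ℂ) := by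
      rw [hE1f, Complex.ofReal_exp]; push_cast; ring_nf
    have eE2 : Complex.exp ((t:ℂ)*(l2f ξ:ℂ)) = ((E2f ξ : ℝ):ℂ) := by
      rw [hE2f, Complex.ofReal_exp]; push_cast; ring_nf
    rw [eE1, eE2, matrix_product_entries c ξ (l1f ξ) (l2f ξ) (E1f ξ) (E2f ξ) (μf ξ)
      hξp hμp hdiff hprod]
  refine Tendsto.congr' (EventuallyEq.symm key) ?_
  apply tendsto_mat2
  intro i j
  fin_cases i <;> fin_cases j <;> simp only [Matrix.smul_apply, Matrix.cons_val', Matrix.cons_val_zero,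
    Matrix.cons_val_one, Matrix.head_cons, Matrix.empty_val', Matrix.cons_val_fin_one,
    Matrix.head_fin_const, smul_eq_mul, Matrix.of_apply, Fin.isValue, Fin.zero_eta, Fin.mk_one]
  · have := (Complex.continuous_ofReal.tendsto _).comp h00
    simpa [Function.comp_def] using this
  · have := tendsto_const_nhds (x := Complex.I).mul ((Complex.continuous_ofReal.tendsto _).comp h0)
    simpa [Function.comp_def] using this
  · have := tendsto_const_nhds (x := Complex.I).mul ((Complex.continuous_ofReal.tendsto _).comp h0c)
    simpa [Function.comp_def] using this
  · have := (Complex.continuous_ofReal.tendsto _).comp h11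
    simpa [Function.comp_def] using this
end
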